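/- Let μ = ω₂^∨ = (1/2, 1/2), J = S̃ ∖ {s₁} = {s₀, s₂}, σ = Ad(τ₂), τ := τ₂. Then: (i) EO^J_{σ,cox}(μ) = {τ, s₁τ, s₁s₂τ, s₁s₀τ}; (ii) EO^J(μ) ∖ EO^J_{σ,cox}(μ) = {s₁s₂s₀τ}; (iii) the element s₁s₂s₀τ is σ-straight; (iv) its Newton point is ν̄_{s₁s₂s₀τ} = (1/2, 1/2). -/

import Mathlib

/- Extended affine Weyl group of type C̃₂ with X = {λ ∈ (1/2)ℤ² : λ₁-λ₂ ∈ ℤ}, realized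
   inside the permutation group of ℚ²: t^λ·u acts by x ↦ λ + u(x), u a signed permutation. -/

open Classical
noncomputable section

abbrev V2 := Fin 2 → ℚ
abbrev Wt2 := Equiv.Perm V2

/-- translation t^λ -/
def transl (lam : V2) : Wt2 := Equiv.addLeft lam
/-- coordinate permutation -/
def permV (u : Equiv.Perm (Fin 2)) : Wt2 := u.arrowCongr (Equiv.refl ℚ)
/-- sign change in coordinate j -/
def negAt (j : Fin 2) : Wt2 :=
  Function.Involutive.toPerm (fun v => fun i => if i = j then -(v i) else v i)
    (by intro v; funext i; by_cases h : i = j <;> simp [h])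
/-- standard basis vector -/
def eV (i : Fin 2) : V2 := Pi.single i 1
/-- standard inner product -/
def dotp (v w : V2) : ℚ := ∑ i, v i * w i
/-- the linear part of an affine transformation -/
def linp (w : Wt2) : V2 → V2 := fun x => w x - w 0

/-- s₁ : the transposition of the two coordinates -/
def s1 : Wt2 := permV (Equiv.swap 0 1)
/-- s₂ : the sign change in coordinate 2 -/
def s2 : Wt2 := negAt 1
/-- s₀ = t^{e₁}·(sign change in coordinate 1) -/
def s0 : Wt2 := transl (eV 0) * negAt 0
/-- r : e₁ ↦ -e₂, e₂ ↦ -e₁ -/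
def rC : Wt2 := negAt 0 * (negAt 1 * permV (Equiv.swap 0 1))
/-- the length-zero element τ₂ = t^{(1/2,1/2)}·r -/
def tau2 : Wt2 := transl (fun _ => 1/2) * rC

/-- the set S̃ of simple reflections of W_a -/
def St : Set Wt2 := {s0, s1, s2}
/-- Ω = {1, τ₂} -/
def Om : Set Wt2 := {1, tau2}

/-- the positive roots e₁-e₂, e₁+e₂, 2e₁, 2e₂ -/
def PhiC2 : Set V2 := {eV 0 - eV 1, eV 0 + eV 1, eV 0 + eV 0, eV 1 + eV 1}

/-- the contribution of a positive root α to the length of w = t^λ·u -/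
def lterm (w : Wt2) (α : V2) : ℚ :=
  if linp w⁻¹ α ∈ PhiC2 then |dotp (w 0) α| else |dotp (w 0) α - 1|

/-- the length function on W̃ -/
def ell (w : Wt2) : ℚ :=
  lterm w (eV 0 - eV 1) + lterm w (eV 0 + eV 1) + lterm w (eV 0 + eV 0) + lterm w (eV 1 + eV 1)

/-- `l` is a reduced word for `w` in the Coxeter system (W_a, S̃) -/
def IsRed (w : Wt2) (l : List Wt2) : Prop :=
  (∀ s ∈ l, s ∈ St) ∧ l.prod = w ∧ (l.length : ℚ) = ell w

/-- Bruhat order on W_a, via the subword property -/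
def bleWa (u u' : Wt2) : Prop :=
  ∃ l l' : List Wt2, IsRed u' l ∧ l'.Sublist l ∧ l'.prod = u

/-- Bruhat order on W̃ = W_a ⊔ W_a·τ₂ -/
def ble (w w' : Wt2) : Prop :=
  ∃ u u' om, om ∈ Om ∧ w = u * om ∧ w' = u' * om ∧ bleWa u u'

/-- the finite Weyl group W₀ = {±1}² ⋊ S₂, generated by s₁, s₂ -/
def W0 : Subgroup Wt2 := Subgroup.closure {s1, s2}

/-- the admissible set Adm(μ) -/
def Adm (μ : V2) : Set Wt2 := {w | ∃ x ∈ W0, ble w (transl ((x : Wt2) μ))}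

/-- the standard parabolic subgroup W_J -/
def WJ (J : Set Wt2) : Subgroup Wt2 := Subgroup.closure J

/-- ^JW̃ : elements of minimal length in their coset W_J·w -/
def minJ (J : Set Wt2) : Set Wt2 := {w | ∀ x ∈ WJ J, ell w ≤ ell (x * w)}

/-- the Ekedahl-Oort elements EO^J(μ) = (W_J·Adm(μ)·W_J) ∩ ^JW̃ -/
def EO (J : Set Wt2) (μ : V2) : Set Wt2 :=
  {w | (∃ x ∈ WJ J, ∃ y ∈ WJ J, ∃ a ∈ Adm μ, w = x * a * y) ∧ w ∈ minJ J}

/-- δ_w = Ad(ω) ∘ σ -/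
def deltaW (sig : MulAut Wt2) (om : Wt2) : MulAut Wt2 := MulAut.conj om * sig

/-- supp_σ(w) for w = u·ω -/
def suppsig (sig : MulAut Wt2) (w : Wt2) : Set Wt2 :=
  {s | ∃ u om l, om ∈ Om ∧ w = u * om ∧ IsRed u l ∧
        ∃ s0 ∈ l, ∃ m : ℤ, s = ((deltaW sig om) ^ m) s0}

/-- the number of orbits of an automorphism δ on a set A -/
def orbCount (δ : MulAut Wt2) (A : Set Wt2) : ℕ :=
  {O : Set Wt2 | ∃ s ∈ A, O = {t | ∃ m : ℤ, (δ ^ m) s = t}}.ncard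

/-- w = u·ω is a σ-Coxeter element of W_{supp_σ(w)} -/
def IsCox (sig : MulAut Wt2) (w : Wt2) : Prop :=
  ∃ u om, om ∈ Om ∧ w = u * om ∧
    ell u = (orbCount (deltaW sig om) (suppsig sig w) : ℚ)

/-- EO^J_{σ,cox}(μ) -/
def EOcox (sig : MulAut Wt2) (J : Set Wt2) (μ : V2) : Set Wt2 :=
  {w | w ∈ EO J μ ∧ suppsig sig w ≠ St ∧ IsCox sig w}

/-- w·σ(w)·σ²(w)⋯σ^{m-1}(w) -/
def sigmaProd (sig : MulAut Wt2) (w : Wt2) (m : ℕ) : Wt2 :=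
  (((List.range m).map fun k => (sig ^ k) w)).prod

/-- w is σ-straight -/
def IsStraight (sig : MulAut Wt2) (w : Wt2) : Prop :=
  ∀ m : ℕ, 1 ≤ m → ell (sigmaProd sig w m) = m * ell w

/-- ν is the Newton point of w -/
def IsNewton (sig : MulAut Wt2) (w : Wt2) (ν : V2) : Prop :=
  ∃ (m : ℕ) (lam : V2), 1 ≤ m ∧ sig ^ m = 1 ∧ sigmaProd sig w m = transl lam ∧
    (∃ x ∈ W0, ν = (x : Wt2) (fun j => lam j / (m : ℚ))) ∧
    ν 1 ≤ ν 0 ∧ 0 ≤ ν 1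

/-!
The extended affine Weyl group of type C̃₂ has a faithful integral model: `t^λ·u` is recorded by
`2λ ∈ ℤ²`, two signs and a swap bit, and multiplication, inversion and the length function are
computable on this data. A reduced word of an element of length `ℓ` has exactly `ℓ` letters, so
reduced words, the Bruhat order (by the subword property), `W_J` and `J`-minimality become finite
enumerations, and `Adm(μ)`, `EO^J(μ)` and the supports are computed by direct enumeration.
For `w = u·τ₂` one has `δ_w = Ad(τ₂)² = 1`, so `supp_σ(w)` is the ordinary support of `u` and `w`
is σ-Coxeter iff `ℓ(u) = |supp(u)|`. Finally `s₁s₂s₀τ₂ = t^{(-1/2, 1/2)}` is a translation fixed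
by `Ad(τ₂)`, so its σ-products are translations of linearly growing length, and its Newton point
is the dominant representative `(1/2, 1/2)` of its translation vector.
-/

lemma transl_apply (lam v : V2) : transl lam v = lam + v := rfl

lemma transl_mul (v w : V2) : transl v * transl w = transl (v + w) := by
  ext x i
  simp [transl_apply, add_assoc]

lemma transl_zero : transl 0 = 1 := by
  ext x i
  simp [transl_apply]

lemma transl_inv (lam : V2) : (transl lam)⁻¹ = transl (-lam) :=
  inv_eq_of_mul_eq_one_left (by rw [transl_mul, neg_add_cancel, transl_zero])

lemma transl_pow (lam : V2) (k : ℕ) : transl lam ^ k = transl ((k : ℚ) • lam) := by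
  induction k with
  | zero => simp [transl_zero]
  | succ n ih =>
    rw [pow_succ, ih, transl_mul, Nat.cast_succ, add_smul, one_smul]

lemma negAt_apply (j : Fin 2) (v : V2) :
    negAt j v = fun i => if i = j then -(v i) else v i := rfl

lemma permV_apply (u : Equiv.Perm (Fin 2)) (v : V2) : permV u v = fun i => v (u.symm i) := rfl

lemma s1_apply (v : V2) : s1 v = fun i => v (Equiv.swap 0 1 i) := by
  simp [s1, permV_apply, Equiv.symm_swap]

lemma eV_apply (i j : Fin 2) : eV i j = if j = i then 1 else 0 := by
  simp [eV, Pi.single_apply]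

lemma ell_transl (lam : V2) :
    ell (transl lam) = |lam 0 - lam 1| + |lam 0 + lam 1| + |2 * lam 0| + |2 * lam 1| := by
  have hterm : ∀ α ∈ PhiC2, lterm (transl lam) α = |lam 0 * α 0 + lam 1 * α 1| := by
    intro α hα
    have hlin : linp (transl lam)⁻¹ α = α := by
      ext i
      simp [linp, transl_inv, transl_apply]
    simp [lterm, hlin, hα, dotp, Fin.sum_univ_two, transl_apply]
  rw [ell, hterm _ (by simp [PhiC2]), hterm _ (by simp [PhiC2]), hterm _ (by simp [PhiC2]),
    hterm _ (by simp [PhiC2])]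
  norm_num [eV_apply, ← sub_eq_add_neg, abs_mul]
  ring

lemma ell_transl_smul (lam : V2) {c : ℚ} (hc : 0 ≤ c) :
    ell (transl (c • lam)) = c * ell (transl lam) := by
  simp only [ell_transl, Pi.smul_apply, smul_eq_mul, ← mul_sub, ← mul_add, mul_left_comm _ c,
    abs_mul, abs_of_nonneg hc]

@[simp] lemma s1_apply_zero (v : V2) : s1 v 0 = v 1 := by simp [s1_apply]
@[simp] lemma s1_apply_one (v : V2) : s1 v 1 = v 0 := by simp [s1_apply]
@[simp] lemma s2_apply_zero (v : V2) : s2 v 0 = v 0 := by simp [s2, negAt_apply]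
@[simp] lemma s2_apply_one (v : V2) : s2 v 1 = -v 1 := by simp [s2, negAt_apply]

/-- `⟨a, b, n₀, n₁, p⟩` encodes `t^{(a/2, b/2)} · ε₀^{n₀} · ε₁^{n₁} · s₁^{p}`, where `εᵢ` is the
sign change in coordinate `i`; the translation part is stored doubled so that it is integral. -/
structure AffC2 where
  a : ℤ
  b : ℤ
  neg0 : Bool
  neg1 : Bool
  swap : Bool
deriving DecidableEq

namespace AffC2

def sgn (e : Bool) : ℤ := if e then -1 else 1

def mul (m n : AffC2) : AffC2 :=
  ⟨m.a + sgn m.neg0 * (if m.swap then n.b else n.a),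
   m.b + sgn m.neg1 * (if m.swap then n.a else n.b),
   xor m.neg0 (if m.swap then n.neg1 else n.neg0),
   xor m.neg1 (if m.swap then n.neg0 else n.neg1),
   xor m.swap n.swap⟩

def inv (m : AffC2) : AffC2 :=
  ⟨-sgn (if m.swap then m.neg1 else m.neg0) * (if m.swap then m.b else m.a),
   -sgn (if m.swap then m.neg0 else m.neg1) * (if m.swap then m.a else m.b),
   if m.swap then m.neg1 else m.neg0,
   if m.swap then m.neg0 else m.neg1,
   m.swap⟩

instance : Mul AffC2 := ⟨mul⟩
instance : One AffC2 := ⟨⟨0, 0, false, false, false⟩⟩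
instance : Inv AffC2 := ⟨inv⟩
instance : Div AffC2 := ⟨fun m n => m * n⁻¹⟩
instance : Pow AffC2 ℕ := ⟨fun m k => npowRec k m⟩
instance : Pow AffC2 ℤ := ⟨fun m k => zpowRec npowRec k m⟩

def transVec (m : AffC2) : V2 := fun i => if i = 0 then (m.a : ℚ) / 2 else (m.b : ℚ) / 2
def negs (m : AffC2) (i : Fin 2) : Bool := if i = 0 then m.neg0 else m.neg1
def src (m : AffC2) (i : Fin 2) : Fin 2 := if m.swap then Equiv.swap 0 1 i else i

lemma mul_def (m n : AffC2) : m * n = mul m n := rfl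
lemma inv_def (m : AffC2) : m⁻¹ = inv m := rfl
lemma one_def : (1 : AffC2) = ⟨0, 0, false, false, false⟩ := rfl

lemma sgn_xor (e f : Bool) : sgn (xor e f) = sgn e * sgn f := by
  cases e <;> cases f <;> rfl

def toPerm (m : AffC2) : Wt2 :=
  transl m.transVec *
    ((if m.neg0 then negAt 0 else 1) *
      ((if m.neg1 then negAt 1 else 1) * (if m.swap then s1 else 1)))

lemma toPerm_apply (m : AffC2) (v : V2) (i : Fin 2) :
    m.toPerm v i = m.transVec i + sgn (m.negs i) * v (m.src i) := by
  rcases m with ⟨a, b, n0, n1, p⟩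
  fin_cases i <;> cases n0 <;> cases n1 <;> cases p <;>
    simp [toPerm, transVec, negs, src, sgn, Equiv.Perm.mul_apply, transl_apply, negAt_apply,
      s1_apply]

lemma toPerm_mul (m n : AffC2) : (m * n).toPerm = m.toPerm * n.toPerm := by
  ext v i
  rcases m with ⟨a, b, e0, e1, p⟩
  rcases n with ⟨a', b', f0, f1, q⟩
  simp only [Equiv.Perm.mul_apply, toPerm_apply]
  fin_cases i <;> cases p <;> cases q <;>
    simp [mul_def, mul, transVec, negs, src, sgn_xor] <;> ring

lemma toPerm_one : (1 : AffC2).toPerm = 1 := by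
  ext v i
  fin_cases i <;> simp [toPerm_apply, transVec, negs, src, sgn, one_def]

/-- Reads off the translation part from the image of `0` and the linear part from the images
of `e₁`, `e₂`. -/
def decode (w : Wt2) : AffC2 :=
  ⟨(2 * w 0 0).num, (2 * w 0 1).num,
   decide ((if w (eV 0) 1 - w 0 1 ≠ 0 then w (eV 1) 0 - w 0 0 else w (eV 0) 0 - w 0 0) < 0),
   decide ((if w (eV 0) 1 - w 0 1 ≠ 0 then w (eV 0) 1 - w 0 1 else w (eV 1) 1 - w 0 1) < 0),
   decide (w (eV 0) 1 - w 0 1 ≠ 0)⟩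

lemma decode_toPerm (m : AffC2) : decode m.toPerm = m := by
  rcases m with ⟨a, b, n0, n1, p⟩
  cases n0 <;> cases n1 <;> cases p <;>
    simp [decode, toPerm_apply, transVec, negs, src, sgn, eV_apply] <;>
    constructor <;> rw [(by ring : 2 * ((_ : ℚ) / 2) = _)] <;> exact Rat.num_intCast _

lemma toPerm_injective : Function.Injective toPerm :=
  Function.LeftInverse.injective decode_toPerm

lemma toPerm_inv (m : AffC2) : m⁻¹.toPerm = m.toPerm⁻¹ := by
  refine eq_inv_of_mul_eq_one_left ?_
  rw [← toPerm_mul, ← toPerm_one]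
  congr 1
  rcases m with ⟨a, b, n0, n1, p⟩
  cases n0 <;> cases n1 <;> cases p <;> simp [mul_def, mul, inv_def, inv, one_def, sgn]

lemma toPerm_npow (m : AffC2) (k : ℕ) : (m ^ k).toPerm = m.toPerm ^ k := by
  induction k with
  | zero => exact toPerm_one
  | succ k ih => rw [pow_succ, ← ih, ← toPerm_mul]; rfl

lemma toPerm_zpow (m : AffC2) (k : ℤ) : (m ^ k).toPerm = m.toPerm ^ k := by
  cases k with
  | ofNat k => exact (toPerm_npow m k).trans (zpow_natCast _ k).symm
  | negSucc k =>
    rw [zpow_negSucc, ← toPerm_npow, ← toPerm_inv]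
    rfl

instance : Group AffC2 :=
  toPerm_injective.group toPerm toPerm_one toPerm_mul toPerm_inv
    (fun m n => by rw [div_eq_mul_inv, ← toPerm_inv, ← toPerm_mul]; rfl)
    toPerm_npow toPerm_zpow

def toPermHom : AffC2 →* Wt2 := ⟨⟨toPerm, toPerm_one⟩, toPerm_mul⟩

lemma toPerm_list_prod (l : List AffC2) : l.prod.toPerm = (l.map toPerm).prod :=
  map_list_prod toPermHom l


def r0 : AffC2 := ⟨2, 0, true, false, false⟩
def r1 : AffC2 := ⟨0, 0, false, false, true⟩
def r2 : AffC2 := ⟨0, 0, false, true, false⟩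
def tau : AffC2 := ⟨1, 1, true, true, true⟩

lemma toPerm_r0 : r0.toPerm = s0 := by
  ext v i
  fin_cases i <;> simp [toPerm_apply, r0, transVec, negs, src, sgn, s0, Equiv.Perm.mul_apply,
    transl_apply, negAt_apply, eV_apply]

lemma toPerm_r1 : r1.toPerm = s1 := by
  ext v i
  fin_cases i <;> simp [toPerm_apply, r1, transVec, negs, src, sgn]

lemma toPerm_r2 : r2.toPerm = s2 := by
  ext v i
  fin_cases i <;> simp [toPerm_apply, r2, transVec, negs, src, sgn, s2, negAt_apply]

lemma toPerm_tau : tau.toPerm = tau2 := by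
  ext v i
  fin_cases i <;> simp [toPerm_apply, tau, transVec, negs, src, sgn, tau2, rC,
    Equiv.Perm.mul_apply, transl_apply, negAt_apply, permV_apply, Equiv.symm_swap]

lemma toPerm_transl (m : AffC2) (h : m.neg0 = false ∧ m.neg1 = false ∧ m.swap = false) :
    m.toPerm = transl m.transVec := by
  rcases m with ⟨a, b, n0, n1, p⟩
  obtain ⟨rfl, rfl, rfl⟩ := h
  simp [toPerm]

def posRoots : List (ℤ × ℤ) := [(1, -1), (1, 1), (2, 0), (0, 2)]

def linApply (m : AffC2) (c d : ℤ) : ℤ × ℤ :=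
  (sgn m.neg0 * (if m.swap then d else c), sgn m.neg1 * (if m.swap then c else d))

def rootTerm2 (m : AffC2) (c d : ℤ) : ℤ :=
  if linApply m⁻¹ c d ∈ posRoots then |m.a * c + m.b * d| else |m.a * c + m.b * d - 2|

/-- Twice the length: the translation part of the model is doubled. -/
def len2 (m : AffC2) : ℤ :=
  rootTerm2 m 1 (-1) + rootTerm2 m 1 1 + rootTerm2 m 2 0 + rootTerm2 m 0 2

lemma mem_PhiC2_iff (v : V2) : v ∈ PhiC2 ↔
    (v 0 = 1 ∧ v 1 = -1) ∨ (v 0 = 1 ∧ v 1 = 1) ∨ (v 0 = 2 ∧ v 1 = 0) ∨ (v 0 = 0 ∧ v 1 = 2) := by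
  simp only [PhiC2, Set.mem_insert_iff, Set.mem_singleton_iff, funext_iff, Fin.forall_fin_two]
  norm_num [eV_apply]

lemma linp_toPerm (m : AffC2) (v : V2) (i : Fin 2) :
    linp m.toPerm v i = sgn (m.negs i) * v (m.src i) := by
  simp [linp, toPerm_apply]

lemma linp_toPerm_mem_PhiC2_iff (m : AffC2) (α : V2) (c d : ℤ) (h0 : α 0 = c) (h1 : α 1 = d) :
    linp m.toPerm α ∈ PhiC2 ↔ linApply m c d ∈ posRoots := by
  have hlin : linp m.toPerm α 0 = (linApply m c d).1 ∧ linp m.toPerm α 1 = (linApply m c d).2 := by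
    rcases m with ⟨a, b, n0, n1, p⟩
    cases p <;> simp [linp_toPerm, linApply, negs, src, h0, h1]
  rw [mem_PhiC2_iff, hlin.1, hlin.2]
  obtain ⟨x, y⟩ := linApply m c d
  simp only [posRoots, List.mem_cons, List.not_mem_nil, Prod.mk.injEq, or_false]
  norm_cast

lemma lterm_toPerm (m : AffC2) (α : V2) (c d : ℤ) (h0 : α 0 = c) (h1 : α 1 = d) :
    lterm m.toPerm α = (rootTerm2 m c d : ℚ) / 2 := by
  have hdot : dotp (m.toPerm 0) α = ((m.a * c + m.b * d : ℤ) : ℚ) / 2 := by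
    simp [dotp, Fin.sum_univ_two, toPerm_apply, transVec, h0, h1]
    ring
  rw [lterm, rootTerm2, ← toPerm_inv, linp_toPerm_mem_PhiC2_iff _ α c d h0 h1, hdot]
  split_ifs
  · rw [abs_div]; norm_num
  · rw [div_sub_one two_ne_zero, abs_div]; norm_num

lemma ell_toPerm (m : AffC2) : ell m.toPerm = (len2 m : ℚ) / 2 := by
  rw [ell, len2, lterm_toPerm m _ 1 (-1), lterm_toPerm m _ 1 1, lterm_toPerm m _ 2 0,
    lterm_toPerm m _ 0 2] <;> norm_num [eV_apply]
  ring

end AffC2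

lemma s1_inv : s1⁻¹ = s1 := by
  rw [← AffC2.toPerm_r1, ← AffC2.toPerm_inv]; rfl

lemma s2_inv : s2⁻¹ = s2 := by
  rw [← AffC2.toPerm_r2, ← AffC2.toPerm_inv]; rfl

lemma tau2_mul_self : tau2 * tau2 = 1 := by
  rw [← AffC2.toPerm_tau, ← AffC2.toPerm_mul, ← AffC2.toPerm_one]; rfl

lemma List.exists_map_eq_of_forall_mem_image {α β : Type*} {f : α → β} {s : Set α} {l : List β}
    (h : ∀ b ∈ l, b ∈ f '' s) : ∃ l' : List α, (∀ a ∈ l', a ∈ s) ∧ l'.map f = l := by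
  induction l with
  | nil => exact ⟨[], by simp, rfl⟩
  | cons b l ih =>
    obtain ⟨a, ha, rfl⟩ := h b List.mem_cons_self
    obtain ⟨l', hl', rfl⟩ := ih fun b hb => h b (List.mem_cons_of_mem _ hb)
    exact ⟨a :: l', List.forall_mem_cons.mpr ⟨ha, hl'⟩, rfl⟩

namespace AffC2

def simpleRefls : List AffC2 := [r0, r1, r2]

lemma St_eq_image : St = toPerm '' {s | s ∈ simpleRefls} := by
  ext w
  simp [St, simpleRefls, ← toPerm_r0, ← toPerm_r1, ← toPerm_r2, or_and_right, exists_or, eq_comm]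

def IsReduced (m : AffC2) (l : List AffC2) : Prop :=
  (∀ s ∈ l, s ∈ simpleRefls) ∧ l.prod = m ∧ 2 * (l.length : ℤ) = len2 m

instance (m : AffC2) (l : List AffC2) : Decidable (IsReduced m l) := by
  unfold IsReduced; infer_instance

lemma isRed_toPerm_iff (m : AffC2) (l : List AffC2) :
    IsRed m.toPerm (l.map toPerm) ↔ IsReduced m l := by
  have hSt : (∀ s ∈ l.map toPerm, s ∈ St) ↔ ∀ s ∈ l, s ∈ simpleRefls := by
    simp [St_eq_image, toPerm_injective.eq_iff]
  have hprod : (l.map toPerm).prod = m.toPerm ↔ l.prod = m := by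
    rw [← toPerm_list_prod, toPerm_injective.eq_iff]
  have hlen : ((l.map toPerm).length : ℚ) = ell m.toPerm ↔ 2 * (l.length : ℤ) = len2 m := by
    rw [List.length_map, ell_toPerm, eq_div_iff two_ne_zero, mul_comm]
    exact_mod_cast Iff.rfl
  rw [IsRed, IsReduced, hSt, hprod, hlen]

lemma exists_of_isRed {u : Wt2} {l : List Wt2} (h : IsRed u l) :
    ∃ m lm, u = m.toPerm ∧ l = lm.map toPerm ∧ IsReduced m lm := by
  obtain ⟨lm, hlm, rfl⟩ :=
    List.exists_map_eq_of_forall_mem_image fun s hs => St_eq_image ▸ h.1 s hs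
  have hu : u = lm.prod.toPerm := by rw [toPerm_list_prod, h.2.1]
  subst hu
  exact ⟨lm.prod, lm, rfl, rfl, (isRed_toPerm_iff _ _).mp h⟩

def words : ℕ → List (List AffC2)
  | 0 => [[]]
  | k + 1 => (words k).flatMap fun l => simpleRefls.map (· :: l)

lemma mem_words {l : List AffC2} (h : ∀ s ∈ l, s ∈ simpleRefls) : l ∈ words l.length := by
  induction l with
  | nil => simp [words]
  | cons s l ih =>
    simp only [List.length_cons, words, List.mem_flatMap, List.mem_map]
    exact ⟨l, ih fun x hx => h x (List.mem_cons_of_mem _ hx), s, h s List.mem_cons_self, rfl⟩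

def reducedWords (m : AffC2) : List (List AffC2) :=
  (words (len2 m / 2).toNat).filter fun l => decide (IsReduced m l)

lemma mem_reducedWords_iff (m : AffC2) (l : List AffC2) : l ∈ reducedWords m ↔ IsReduced m l := by
  refine ⟨fun h => of_decide_eq_true (List.mem_filter.mp h).2, fun h => ?_⟩
  have hlen : l.length = (len2 m / 2).toNat := by have := h.2.2; omega
  exact List.mem_filter.mpr ⟨hlen ▸ mem_words h.1, decide_eq_true h⟩

def bruhatBelow (m : AffC2) : List AffC2 :=
  (reducedWords m).flatMap fun l => l.sublists.map List.prod

lemma bleWa_toPerm_iff (u : Wt2) (m : AffC2) :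
    bleWa u m.toPerm ↔ ∃ n ∈ bruhatBelow m, u = n.toPerm := by
  simp only [bruhatBelow, List.mem_flatMap, List.mem_map, List.mem_sublists, mem_reducedWords_iff]
  constructor
  · rintro ⟨l, l', hred, hsub, rfl⟩
    obtain ⟨m', lm, hm', rfl, hredM⟩ := exists_of_isRed hred
    obtain rfl := toPerm_injective hm'
    obtain ⟨lm', hsubM, rfl⟩ := List.sublist_map_iff.mp hsub
    exact ⟨lm'.prod, ⟨lm, hredM, lm', hsubM, rfl⟩, toPerm_list_prod lm' |>.symm⟩
  · rintro ⟨n, ⟨lm, hred, l', hsub, rfl⟩, rfl⟩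
    exact ⟨lm.map toPerm, l'.map toPerm, (isRed_toPerm_iff m lm).mpr hred, hsub.map toPerm,
      (toPerm_list_prod l').symm⟩

lemma Om_eq_image : Om = toPerm '' {o | o ∈ [1, tau]} := by
  ext w
  simp [Om, ← toPerm_one, ← toPerm_tau, or_and_right, exists_or, eq_comm]

lemma ble_toPerm_iff (w : Wt2) (m : AffC2) :
    ble w m.toPerm ↔ ∃ o ∈ [1, tau], ∃ n ∈ bruhatBelow (m * o⁻¹), w = (n * o).toPerm := by
  constructor
  · rintro ⟨u, u', om, hom, rfl, hw', hble⟩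
    rw [Om_eq_image] at hom
    obtain ⟨o, ho, rfl⟩ := hom
    have hu' : u' = (m * o⁻¹).toPerm := by rw [toPerm_mul, toPerm_inv, hw', mul_inv_cancel_right]
    obtain ⟨n, hn, rfl⟩ := (bleWa_toPerm_iff u _).mp (hu' ▸ hble)
    exact ⟨o, ho, n, hn, (toPerm_mul n o).symm⟩
  · rintro ⟨o, ho, n, hn, rfl⟩
    refine ⟨n.toPerm, (m * o⁻¹).toPerm, o.toPerm, Om_eq_image ▸ ⟨o, ho, rfl⟩, toPerm_mul n o, ?_,
      (bleWa_toPerm_iff _ _).mpr ⟨n, hn, rfl⟩⟩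
    rw [← toPerm_mul, inv_mul_cancel_right]

end AffC2

lemma s1_mem_W0 : s1 ∈ W0 := Subgroup.subset_closure (by simp)
lemma s2_mem_W0 : s2 ∈ W0 := Subgroup.subset_closure (by simp)

def halfCorners : Set V2 := {v | |v 0| = 1/2 ∧ |v 1| = 1/2}

lemma mapsTo_halfCorners_of_mem_W0 {x : Wt2} (hx : x ∈ W0) :
    Set.MapsTo x halfCorners halfCorners := by
  have hgen : ∀ y ∈ ({s1, s2} : Set Wt2), Set.MapsTo y halfCorners halfCorners := by
    rintro y (rfl | rfl) v ⟨h0, h1⟩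
    · exact ⟨by rwa [s1_apply_zero], by rwa [s1_apply_one]⟩
    · exact ⟨by rwa [s2_apply_zero], by rwa [s2_apply_one, abs_neg]⟩
  induction hx using Subgroup.closure_induction'' with
  | mem y hy => exact hgen y hy
  | inv_mem y hy =>
    rcases hy with rfl | rfl
    · exact s1_inv ▸ hgen s1 (by simp)
    · exact s2_inv ▸ hgen s2 (by simp)
  | one => exact Set.mapsTo_id _
  | mul x y _ _ hx hy => exact hx.comp hy

namespace AffC2

/-- The translations `t^{x·μ}`, `x ∈ W₀`, for `μ = (1/2, 1/2)`. -/
def orbitTransl : List AffC2 :=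
  [⟨1, 1, false, false, false⟩, ⟨1, -1, false, false, false⟩,
   ⟨-1, 1, false, false, false⟩, ⟨-1, -1, false, false, false⟩]

lemma exists_mem_orbitTransl_of_mem_halfCorners {v : V2} (hv : v ∈ halfCorners) :
    ∃ t ∈ orbitTransl, transl v = t.toPerm := by
  have hhalf : ∀ q : ℚ, |q| = 1/2 → ∃ c : ℤ, (c = 1 ∨ c = -1) ∧ q = (c : ℚ) / 2 := by
    intro q hq
    rcases abs_eq (by norm_num) |>.mp hq with rfl | rfl
    exacts [⟨1, by norm_num⟩, ⟨-1, by norm_num⟩]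
  obtain ⟨a, ha, h0⟩ := hhalf _ hv.1
  obtain ⟨b, hb, h1⟩ := hhalf _ hv.2
  refine ⟨⟨a, b, false, false, false⟩, ?_, ?_⟩
  · rcases ha with rfl | rfl <;> rcases hb with rfl | rfl <;> decide
  · rw [toPerm_transl _ ⟨rfl, rfl, rfl⟩]
    congr 1
    ext i
    fin_cases i <;> simp [transVec, h0, h1]

lemma exists_mem_W0_transl_eq {t : AffC2} (ht : t ∈ orbitTransl) :
    ∃ x ∈ W0, transl ((x : Wt2) fun _ => 1/2) = t.toPerm := by
  simp only [orbitTransl, List.mem_cons, List.not_mem_nil, or_false] at ht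
  obtain ⟨x, hx, hxv⟩ : ∃ x ∈ W0, (x : Wt2) (fun _ => 1/2) = t.transVec := by
    rcases ht with rfl | rfl | rfl | rfl <;>
      [refine ⟨1, one_mem _, ?_⟩;
       refine ⟨s2, s2_mem_W0, ?_⟩;
       refine ⟨s1 * s2, mul_mem s1_mem_W0 s2_mem_W0, ?_⟩;
       refine ⟨s2 * s1 * s2, mul_mem (mul_mem s2_mem_W0 s1_mem_W0) s2_mem_W0, ?_⟩] <;>
      ext i <;> fin_cases i <;> norm_num [transVec]
  refine ⟨x, hx, ?_⟩
  rw [hxv, toPerm_transl]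
  rcases ht with rfl | rfl | rfl | rfl <;> exact ⟨rfl, rfl, rfl⟩

def admissible : List AffC2 :=
  orbitTransl.flatMap fun t => [1, tau].flatMap fun o => (bruhatBelow (t * o⁻¹)).map (· * o)

lemma Adm_eq_image : Adm (fun _ => 1/2) = toPerm '' {m | m ∈ admissible} := by
  ext w
  simp only [Adm, admissible, Set.mem_ofPred_eq, Set.mem_image, List.mem_flatMap, List.mem_map]
  constructor
  · rintro ⟨x, hx, hble⟩
    have hμ : (fun _ => 1/2 : V2) ∈ halfCorners := by norm_num [halfCorners]
    obtain ⟨t, ht, heq⟩ :=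
      exists_mem_orbitTransl_of_mem_halfCorners (mapsTo_halfCorners_of_mem_W0 hx hμ)
    rw [heq, ble_toPerm_iff] at hble
    obtain ⟨o, ho, n, hn, rfl⟩ := hble
    exact ⟨n * o, ⟨t, ht, o, ho, n, hn, rfl⟩, rfl⟩
  · rintro ⟨m, ⟨t, ht, o, ho, n, hn, rfl⟩, rfl⟩
    obtain ⟨x, hx, heq⟩ := exists_mem_W0_transl_eq ht
    exact ⟨x, hx, heq ▸ (ble_toPerm_iff _ _).mpr ⟨o, ho, n, hn, rfl⟩⟩


def parabolicJ : List AffC2 := [1, r0, r2, r0 * r2]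

lemma WJ_eq_image : (WJ {s0, s2} : Set Wt2) = toPerm '' {p | p ∈ parabolicJ} := by
  have hs0 : s0 ∈ WJ {s0, s2} := Subgroup.subset_closure (by simp)
  have hs2 : s2 ∈ WJ {s0, s2} := Subgroup.subset_closure (by simp)
  apply Set.Subset.antisymm
  · intro x hx
    induction hx using Subgroup.closure_induction with
    | mem y hy =>
      rcases hy with rfl | rfl
      exacts [⟨r0, by decide, toPerm_r0⟩, ⟨r2, by decide, toPerm_r2⟩]
    | one => exact ⟨1, by decide, toPerm_one⟩
    | mul x y _ _ hx hy =>
      obtain ⟨p, hp, rfl⟩ := hx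
      obtain ⟨q, hq, rfl⟩ := hy
      have hmul : ∀ p ∈ parabolicJ, ∀ q ∈ parabolicJ, p * q ∈ parabolicJ := by decide
      exact ⟨p * q, hmul p hp q hq, toPerm_mul p q⟩
    | inv x _ hx =>
      obtain ⟨p, hp, rfl⟩ := hx
      have hinv : ∀ p ∈ parabolicJ, p⁻¹ ∈ parabolicJ := by decide
      exact ⟨p⁻¹, hinv p hp, toPerm_inv p⟩
  · rintro _ ⟨p, hp, rfl⟩
    simp only [parabolicJ, List.mem_cons, List.not_mem_nil, or_false] at hp
    rcases hp with rfl | rfl | rfl | rfl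
    · exact toPerm_one ▸ one_mem _
    · exact toPerm_r0 ▸ hs0
    · exact toPerm_r2 ▸ hs2
    · rw [toPerm_mul, toPerm_r0, toPerm_r2]
      exact mul_mem hs0 hs2

def IsMinJ (m : AffC2) : Prop := ∀ p ∈ parabolicJ, len2 m ≤ len2 (p * m)

instance (m : AffC2) : Decidable (IsMinJ m) := by unfold IsMinJ; infer_instance

lemma toPerm_mem_minJ_iff (m : AffC2) : m.toPerm ∈ minJ {s0, s2} ↔ IsMinJ m := by
  simp only [minJ, IsMinJ, Set.mem_ofPred_eq, ← SetLike.mem_coe, WJ_eq_image,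
    Set.forall_mem_image, ← toPerm_mul, ell_toPerm]
  refine forall₂_congr fun p _ => ?_
  rw [div_le_div_iff_of_pos_right two_pos]
  exact_mod_cast Iff.rfl

def coxList : List AffC2 := [tau, r1 * tau, r1 * r2 * tau, r1 * r0 * tau]

def eoList : List AffC2 := coxList ++ [r1 * r2 * r0 * tau]

lemma EO_eq_image : EO {s0, s2} (fun _ => 1/2) = toPerm '' {m | m ∈ eoList} := by
  ext w
  constructor
  · rintro ⟨⟨x, hx, y, hy, a, ha, rfl⟩, hmin⟩
    rw [← SetLike.mem_coe, WJ_eq_image] at hx hy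
    rw [Adm_eq_image] at ha
    obtain ⟨p, hp, rfl⟩ := hx
    obtain ⟨q, hq, rfl⟩ := hy
    obtain ⟨n, hn, rfl⟩ := ha
    rw [← toPerm_mul, ← toPerm_mul, toPerm_mem_minJ_iff] at hmin
    have hEO : ∀ p ∈ parabolicJ, ∀ n ∈ admissible, ∀ q ∈ parabolicJ,
        IsMinJ (p * n * q) → p * n * q ∈ eoList := by decide
    exact ⟨p * n * q, hEO p hp n hn q hq hmin, by rw [toPerm_mul, toPerm_mul]⟩
  · rintro ⟨m, hm, rfl⟩
    have hEO : ∀ m ∈ eoList, m ∈ admissible ∧ IsMinJ m := by decide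
    refine ⟨⟨1, one_mem _, 1, one_mem _, m.toPerm, ?_, by group⟩,
      (toPerm_mem_minJ_iff m).mpr (hEO m hm).2⟩
    exact Adm_eq_image ▸ ⟨m, (hEO m hm).1, rfl⟩

end AffC2

lemma orbCount_one (A : Set Wt2) : orbCount 1 A = A.ncard := by
  have h : {O : Set Wt2 | ∃ s ∈ A, O = {t | ∃ m : ℤ, ((1 : MulAut Wt2) ^ m) s = t}} =
      (fun s => ({s} : Set Wt2)) '' A := by
    ext O
    simp [one_zpow, eq_comm]
  rw [orbCount, h, Set.ncard_image_of_injective _ Set.singleton_injective]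

namespace AffC2

lemma deltaW_conj_tau2_tau2 : deltaW (MulAut.conj tau2) tau2 = 1 := by
  rw [deltaW, ← map_mul, tau2_mul_self, map_one]

def supp (m : AffC2) : List AffC2 :=
  simpleRefls.filter fun s => (reducedWords m).any fun l => decide (s ∈ l)

lemma mem_supp_iff (m s : AffC2) : s ∈ supp m ↔ ∃ l ∈ reducedWords m, s ∈ l := by
  simp only [supp, List.mem_filter, List.any_eq_true, decide_eq_true_eq]
  refine ⟨And.right, fun ⟨l, hl, hs⟩ => ⟨?_, l, hl, hs⟩⟩
  exact ((mem_reducedWords_iff m l).mp hl).1 s hs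

/-- For `w = u·τ₂` we have `δ_w = Ad(τ₂)² = 1`, so `supp_σ(w)` is the support of `u`; the
hypothesis says that `w ∉ W_a`, which excludes `ω = 1`. -/
lemma suppsig_toPerm {m : AffC2} (hm : reducedWords m = []) :
    suppsig (MulAut.conj tau2) m.toPerm = toPerm '' {s | s ∈ supp (m * tau⁻¹)} := by
  ext s
  constructor
  · rintro ⟨u, om, l, hom, hw, hred, s', hs', k, rfl⟩
    obtain ⟨n, lm, rfl, rfl, hredM⟩ := exists_of_isRed hred
    rw [Om_eq_image] at hom
    obtain ⟨o, ho, rfl⟩ := hom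
    obtain rfl : m = n * o := toPerm_injective (by rw [toPerm_mul, hw])
    simp only [List.mem_cons, List.not_mem_nil, or_false] at ho
    rcases ho with rfl | rfl
    · rw [mul_one] at hm
      rw [← mem_reducedWords_iff, hm] at hredM
      exact absurd hredM List.not_mem_nil
    · obtain ⟨p, hp, rfl⟩ := List.mem_map.mp hs'
      rw [toPerm_tau, deltaW_conj_tau2_tau2, one_zpow, mul_inv_cancel_right]
      exact ⟨p, (mem_supp_iff _ p).mpr ⟨lm, (mem_reducedWords_iff _ _).mpr hredM, hp⟩, rfl⟩
  · rintro ⟨p, hp, rfl⟩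
    obtain ⟨l, hl, hpl⟩ := (mem_supp_iff _ p).mp hp
    refine ⟨(m * tau⁻¹).toPerm, tau2, l.map toPerm, Or.inr rfl, ?_,
      (isRed_toPerm_iff _ l).mpr ((mem_reducedWords_iff _ l).mp hl), p.toPerm,
      List.mem_map_of_mem hpl, 0, rfl⟩
    rw [← toPerm_tau, ← toPerm_mul, inv_mul_cancel_right]

lemma image_supp_eq_St_iff (u : AffC2) :
    toPerm '' {s | s ∈ supp u} = St ↔ supp u = simpleRefls := by
  rw [St_eq_image, (Set.image_injective.mpr toPerm_injective).eq_iff]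
  refine ⟨fun h => List.filter_eq_self.mpr fun s hs => ?_, fun h => by rw [h]⟩
  have : s ∈ supp u := by rw [← Set.mem_ofPred_eq (p := (· ∈ supp u)), h]; exact hs
  exact (List.mem_filter.mp this).2

lemma isCox_toPerm {m : AffC2} (hm : reducedWords m = [])
    (hlen : len2 (m * tau⁻¹) = 2 * (supp (m * tau⁻¹)).length) :
    IsCox (MulAut.conj tau2) m.toPerm := by
  refine ⟨(m * tau⁻¹).toPerm, tau2, Or.inr rfl, ?_, ?_⟩
  · rw [← toPerm_tau, ← toPerm_mul, inv_mul_cancel_right]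
  have hnodup : (supp (m * tau⁻¹)).Nodup := List.Nodup.filter _ (by decide)
  rw [deltaW_conj_tau2_tau2, orbCount_one, suppsig_toPerm hm,
    Set.ncard_image_of_injective _ toPerm_injective, ← List.coe_toFinset, Set.ncard_coe_finset,
    List.toFinset_card_of_nodup hnodup, ell_toPerm, hlen]
  push_cast
  ring

lemma EOcox_eq_image :
    EOcox (MulAut.conj tau2) {s0, s2} (fun _ => 1/2) = toPerm '' {m | m ∈ coxList} := by
  ext w
  constructor
  · rintro ⟨hEO, hne, -⟩
    rw [EO_eq_image] at hEO
    obtain ⟨m, hm, rfl⟩ := hEO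
    rcases List.mem_append.mp hm with hm | hm
    · exact ⟨m, hm, rfl⟩
    · obtain rfl := List.mem_singleton.mp hm
      refine absurd ?_ hne
      rw [suppsig_toPerm (by decide), image_supp_eq_St_iff]
      decide
  · rintro ⟨m, hm, rfl⟩
    have hcox : ∀ m ∈ coxList, reducedWords m = [] ∧ supp (m * tau⁻¹) ≠ simpleRefls ∧
        len2 (m * tau⁻¹) = 2 * (supp (m * tau⁻¹)).length := by decide
    obtain ⟨hred, hne, hlen⟩ := hcox m hm
    refine ⟨EO_eq_image ▸ ⟨m, List.mem_append_left _ hm, rfl⟩, ?_, isCox_toPerm hred hlen⟩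
    rw [suppsig_toPerm hred, Ne, image_supp_eq_St_iff]
    exact hne

end AffC2

lemma sigmaProd_of_map_eq {sig : MulAut Wt2} {w : Wt2} (h : sig w = w) (m : ℕ) :
    sigmaProd sig w m = w ^ m := by
  have hpow : ∀ k, (sig ^ k) w = w := fun k => by
    induction k with
    | zero => rfl
    | succ k ih => rw [pow_succ, MulAut.mul_apply, h, ih]
  rw [sigmaProd, List.map_congr_left fun k _ => hpow k, List.map_const', List.length_range,
    List.prod_replicate]

lemma isStraight_transl {sig : MulAut Wt2} {lam : V2} (h : sig (transl lam) = transl lam) :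
    IsStraight sig (transl lam) := by
  intro m _
  rw [sigmaProd_of_map_eq h, transl_pow, ell_transl_smul _ (Nat.cast_nonneg m)]

lemma isNewton_transl {sig : MulAut Wt2} {lam ν : V2} {m : ℕ} (h : sig (transl lam) = transl lam)
    (hm : 1 ≤ m) (hsig : sig ^ m = 1) {x : Wt2} (hx : x ∈ W0) (hν : ν = x lam)
    (hdom : ν 1 ≤ ν 0 ∧ 0 ≤ ν 1) : IsNewton sig (transl lam) ν := by
  refine ⟨m, (m : ℚ) • lam, hm, hsig, by rw [sigmaProd_of_map_eq h, transl_pow], ⟨x, hx, ?_⟩, hdom⟩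
  have hm0 : (m : ℚ) ≠ 0 := by exact_mod_cast (Nat.one_le_iff_ne_zero.mp hm)
  rw [hν]
  congr 1
  ext j
  simp [mul_div_cancel_left₀ _ hm0]

section

open AffC2

lemma s1_s2_s0_tau2_eq_transl : s1 * s2 * s0 * tau2 = transl ![-1/2, 1/2] := by
  rw [← toPerm_r0, ← toPerm_r1, ← toPerm_r2, ← toPerm_tau, ← toPerm_mul, ← toPerm_mul,
    ← toPerm_mul, show r1 * r2 * r0 * tau = ⟨-1, 1, false, false, false⟩ by decide,
    toPerm_transl _ ⟨rfl, rfl, rfl⟩]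
  congr 1
  ext i
  fin_cases i <;> norm_num [transVec]

lemma conj_tau2_s1_s2_s0_tau2 :
    MulAut.conj tau2 (s1 * s2 * s0 * tau2) = s1 * s2 * s0 * tau2 := by
  rw [MulAut.conj_apply, ← toPerm_r0, ← toPerm_r1, ← toPerm_r2, ← toPerm_tau, ← toPerm_inv]
  simp only [← toPerm_mul]
  rfl

lemma EO_sdiff_EOcox_eq :
    EO {s0, s2} (fun _ => 1/2) \ EOcox (MulAut.conj tau2) {s0, s2} (fun _ => 1/2) =
      {s1 * s2 * s0 * tau2} := by
  rw [EO_eq_image, EOcox_eq_image, ← Set.image_sdiff toPerm_injective]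
  have hdiff : {m | m ∈ eoList} \ {m | m ∈ coxList} = {r1 * r2 * r0 * tau} := by
    ext m
    simp only [eoList, List.mem_append, List.mem_singleton, Set.mem_sdiff, Set.mem_ofPred_eq,
      Set.mem_singleton_iff]
    constructor
    · rintro ⟨hm | hm, hn⟩
      exacts [absurd hm hn, hm]
    · rintro rfl
      exact ⟨Or.inr rfl, by decide⟩
  rw [hdiff, Set.image_singleton, toPerm_mul, toPerm_mul, toPerm_mul, toPerm_r0, toPerm_r1,
    toPerm_r2, toPerm_tau]

lemma EOcox_eq :
    EOcox (MulAut.conj tau2) {s0, s2} (fun _ => 1/2) =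
      {tau2, s1 * tau2, s1 * s2 * tau2, s1 * s0 * tau2} := by
  rw [EOcox_eq_image]
  ext w
  simp [coxList, toPerm_mul, toPerm_r0, toPerm_r1, toPerm_r2, toPerm_tau, or_and_right,
    exists_or, eq_comm]

lemma isStraight_s1_s2_s0_tau2 : IsStraight (MulAut.conj tau2) (s1 * s2 * s0 * tau2) := by
  have hfix := conj_tau2_s1_s2_s0_tau2
  rw [s1_s2_s0_tau2_eq_transl] at hfix ⊢
  exact isStraight_transl hfix

lemma isNewton_s1_s2_s0_tau2 :
    IsNewton (MulAut.conj tau2) (s1 * s2 * s0 * tau2) (fun _ => 1/2) := by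
  have hfix := conj_tau2_s1_s2_s0_tau2
  rw [s1_s2_s0_tau2_eq_transl] at hfix ⊢
  refine isNewton_transl hfix one_le_two ?_ (mul_mem s2_mem_W0 s1_mem_W0) ?_ (by norm_num)
  · rw [← map_pow, sq, tau2_mul_self, map_one]
  · ext i
    fin_cases i <;> norm_num

end

/-- (C̃₂, ω₂^∨, S̃ ∖ {s₁}, Ad(τ₂)). -/
theorem statement15 :
    EOcox (MulAut.conj tau2) {s0, s2} (fun _ => 1/2) =
      {tau2, s1 * tau2, s1 * s2 * tau2, s1 * s0 * tau2} ∧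
    EO {s0, s2} (fun _ => 1/2) \ EOcox (MulAut.conj tau2) {s0, s2} (fun _ => 1/2) =
      {s1 * s2 * s0 * tau2} ∧
    IsStraight (MulAut.conj tau2) (s1 * s2 * s0 * tau2) ∧
    IsNewton (MulAut.conj tau2) (s1 * s2 * s0 * tau2) (fun _ => 1/2) :=
  ⟨EOcox_eq, EO_sdiff_EOcox_eq, isStraight_s1_s2_s0_tau2, isNewton_s1_s2_s0_tau2⟩
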